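/- Let G be a finite simple graph on a finite vertex set V, let v ∈ V, and let G' be the graph obtained from G by attaching an edge to the vertex v: the graph on V ⊕ {∗} whose adjacency is that of G on V together with the single new edge {v, ∗}. Then Ψ_{G'} equals the image of Ψ_G under the variable renaming induced by the inclusion E(G) ↪ E(G') (in particular the new edge variable does not occur in Ψ_{G'}), and for any field k there is a bijection k^{E(G')} ∖ X̂_{G'} ≃ k × (k^{E(G)} ∖ X̂_G). (This is the property U(Γ') = [𝔸¹]·U(Γ) of the universal algebro-geometric Feynman rule.) -/

import Mathlib

open scoped Classical
noncomputable section

open MvPolynomial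

/-- A spanning forest of a simple graph `G`: a subset of the edge set that is maximal
among subsets of the edge set whose associated spanning subgraph is acyclic. -/
def SimpleGraph.IsSpanningForest {V : Type*} (G : SimpleGraph V) (T : Set (Sym2 V)) : Prop :=
  T ⊆ G.edgeSet ∧ (SimpleGraph.fromEdgeSet T).IsAcyclic ∧
    ∀ T' : Set (Sym2 V), T ⊆ T' → T' ⊆ G.edgeSet →
      (SimpleGraph.fromEdgeSet T').IsAcyclic → T' = T

/-- The Kirchhoff–Symanzik polynomial of a finite simple graph `G`:
`Ψ_G = ∑_T ∏_{e ∉ T} x_e`, the sum over spanning forests `T` of `G`. -/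
def SimpleGraph.kirchhoff {V : Type*} [Fintype V] (G : SimpleGraph V) :
    MvPolynomial G.edgeSet ℤ :=
  ∑ T ∈ Finset.univ.filter (fun T : Finset (Sym2 V) => G.IsSpanningForest ↑T),
    ∏ e ∈ Finset.univ.filter (fun e : G.edgeSet => (e : Sym2 V) ∉ T), X e

/-- The affine graph hypersurface `X̂_G ⊆ k^{E(G)}`. -/
def SimpleGraph.graphHypersurface {V : Type*} [Fintype V] (G : SimpleGraph V)
    (k : Type*) [CommRing k] : Set (G.edgeSet → k) :=
  {t | (MvPolynomial.aeval t) G.kirchhoff = 0}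

/-- The complement `k^{E(G)} ∖ X̂_G` of the affine graph hypersurface. -/
def SimpleGraph.graphHypersurfaceComplement {V : Type*} [Fintype V] (G : SimpleGraph V)
    (k : Type*) [CommRing k] : Set (G.edgeSet → k) :=
  {t | (MvPolynomial.aeval t) G.kirchhoff ≠ 0}

/-- The disjoint union of two simple graphs. -/
def SimpleGraph.disjUnion {V₁ V₂ : Type*} (G₁ : SimpleGraph V₁) (G₂ : SimpleGraph V₂) :
    SimpleGraph (V₁ ⊕ V₂) where
  Adj x y := (∃ a b, x = Sum.inl a ∧ y = Sum.inl b ∧ G₁.Adj a b) ∨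
             (∃ a b, x = Sum.inr a ∧ y = Sum.inr b ∧ G₂.Adj a b)
  symm := by
    constructor
    rintro x y (⟨a, b, rfl, rfl, h⟩ | ⟨a, b, rfl, rfl, h⟩)
    · exact Or.inl ⟨b, a, rfl, rfl, h.symm⟩
    · exact Or.inr ⟨b, a, rfl, rfl, h.symm⟩
  loopless := by
    constructor
    rintro x (⟨a, b, rfl, hab, h⟩ | ⟨a, b, rfl, hab, h⟩) <;>
      · cases hab
        exact (h.ne rfl).elim

lemma SimpleGraph.disjUnion_mem_inl {V₁ V₂ : Type*} {G₁ : SimpleGraph V₁}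
    {G₂ : SimpleGraph V₂} {e : Sym2 V₁} (he : e ∈ G₁.edgeSet) :
    e.map Sum.inl ∈ (G₁.disjUnion G₂).edgeSet := by
  induction e using Sym2.ind with
  | _ a b => exact Or.inl ⟨a, b, rfl, rfl, he⟩

lemma SimpleGraph.disjUnion_mem_inr {V₁ V₂ : Type*} {G₁ : SimpleGraph V₁}
    {G₂ : SimpleGraph V₂} {e : Sym2 V₂} (he : e ∈ G₂.edgeSet) :
    e.map Sum.inr ∈ (G₁.disjUnion G₂).edgeSet := by
  induction e using Sym2.ind with
  | _ a b => exact Or.inr ⟨a, b, rfl, rfl, he⟩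

/-- The canonical inclusion `E(G₁) ↪ E(G₁ ⊔ G₂)`. -/
def SimpleGraph.disjUnionEdgeInl {V₁ V₂ : Type*} (G₁ : SimpleGraph V₁) (G₂ : SimpleGraph V₂) :
    G₁.edgeSet → (G₁.disjUnion G₂).edgeSet :=
  fun e => ⟨(e : Sym2 V₁).map Sum.inl, SimpleGraph.disjUnion_mem_inl e.2⟩

/-- The canonical inclusion `E(G₂) ↪ E(G₁ ⊔ G₂)`. -/
def SimpleGraph.disjUnionEdgeInr {V₁ V₂ : Type*} (G₁ : SimpleGraph V₁) (G₂ : SimpleGraph V₂) :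
    G₂.edgeSet → (G₁.disjUnion G₂).edgeSet :=
  fun e => ⟨(e : Sym2 V₂).map Sum.inr, SimpleGraph.disjUnion_mem_inr e.2⟩

/-- The graph obtained from `G` by attaching a new edge from `v ∈ V` to a new vertex. -/
def SimpleGraph.attachEdge {V : Type*} (G : SimpleGraph V) (v : V) :
    SimpleGraph (V ⊕ Unit) where
  Adj x y := (∃ a b, x = Sum.inl a ∧ y = Sum.inl b ∧ G.Adj a b) ∨
    (x = Sum.inl v ∧ y = Sum.inr ()) ∨ (x = Sum.inr () ∧ y = Sum.inl v)
  symm := by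
    constructor
    rintro x y (⟨a, b, rfl, rfl, h⟩ | ⟨rfl, rfl⟩ | ⟨rfl, rfl⟩)
    · exact Or.inl ⟨b, a, rfl, rfl, h.symm⟩
    · exact Or.inr (Or.inr ⟨rfl, rfl⟩)
    · exact Or.inr (Or.inl ⟨rfl, rfl⟩)
  loopless := by
    constructor
    rintro x (⟨a, b, rfl, hab, h⟩ | ⟨rfl, h⟩ | ⟨rfl, h⟩)
    · cases hab; exact (h.ne rfl).elim
    · exact absurd h (by simp)
    · exact absurd h (by simp)

lemma SimpleGraph.attachEdge_mem {V : Type*} {G : SimpleGraph V} {v : V} {e : Sym2 V}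
    (he : e ∈ G.edgeSet) : e.map Sum.inl ∈ (G.attachEdge v).edgeSet := by
  induction e using Sym2.ind with
  | _ a b => exact Or.inl ⟨a, b, rfl, rfl, he⟩

/-- The canonical inclusion `E(G) ↪ E(G')` where `G'` is `G` with an edge attached
at `v`. -/
def SimpleGraph.attachEdgeInc {V : Type*} (G : SimpleGraph V) (v : V) :
    G.edgeSet → (G.attachEdge v).edgeSet :=
  fun e => ⟨(e : Sym2 V).map Sum.inl, SimpleGraph.attachEdge_mem e.2⟩

/-!
The attached edge `e₀ = {v, ∗}` ends at a vertex of degree one, so it lies on no cycle and adding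
or removing it never affects acyclicity. Hence the spanning forests of `G'` are exactly the sets
`T ∪ {e₀}` with `T` a spanning forest of `G`. As `e₀` lies in every spanning forest, the variable
`x_{e₀}` never occurs in `Ψ_{G'}`, which is `Ψ_G` with renamed variables, and the coordinate
`t_{e₀}` of a point of `k^{E(G')} ∖ X̂_{G'}` is unconstrained.
-/

theorem maximal_iff_maximal_and_eq_of_leftInverse {α β : Type*} [Preorder α] [PartialOrder β]
    {P : α → Prop} {Q : β → Prop} {f : α → β} {g : β → α}
    (hf : Monotone f) (hg : Monotone g) (hgf : Function.LeftInverse g f)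
    (hPQ : ∀ a, P a → Q (f a)) (hQP : ∀ b, Q b → P (g b)) (hle : ∀ b, Q b → b ≤ f (g b))
    {b : β} : Maximal Q b ↔ Maximal P (g b) ∧ f (g b) = b := by
  constructor
  · intro hb
    have hfgb : f (g b) = b := (hb.2 (hPQ _ (hQP _ hb.1)) (hle _ hb.1)).antisymm (hle _ hb.1)
    refine ⟨⟨hQP _ hb.1, fun a ha hba => ?_⟩, hfgb⟩
    have : f a ≤ b := hb.2 (hPQ _ ha) (hfgb ▸ hf hba)
    simpa only [hgf a] using hg this
  · rintro ⟨hgb, hfgb⟩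
    refine ⟨hfgb ▸ hPQ _ hgb.1, fun b' hb' hbb' => ?_⟩
    calc b' ≤ f (g b') := hle _ hb'
      _ ≤ f (g b) := hf (hgb.2 (hQP _ hb') (hg hbb'))
      _ = b := hfgb

def MvPolynomial.nonvanishingRenameEquiv {σ τ R k : Type*} [CommSemiring R] [CommSemiring k]
    [Algebra R k] (e : Option σ ≃ τ) (p : MvPolynomial σ R) :
    {t : τ → k // aeval t (rename (e ∘ some) p) ≠ 0} ≃ k × {s : σ → k // aeval s p ≠ 0} where
  toFun t := (t.1 (e none), ⟨t.1 ∘ e ∘ some, by simpa [aeval_rename] using t.2⟩)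
  invFun x := ⟨fun j => (e.symm j).elim x.1 x.2.1, by
    simpa [aeval_rename, Function.comp_def] using x.2.2⟩
  left_inv t := by
    ext j
    obtain ⟨o, rfl⟩ := e.surjective j
    cases o <;> simp
  right_inv x := by ext <;> simp

namespace SimpleGraph

variable {V W : Type*}

theorem IsAcyclic.map {G : SimpleGraph V} (f : V ↪ W) (h : G.IsAcyclic) :
    (G.map f).IsAcyclic := by
  intro u c hc
  have hsupp : ∀ x ∈ c.support, x ∈ Set.range f := by
    intro x hx
    obtain ⟨e, he, hxe⟩ := (c.mem_support_iff_exists_mem_edges_of_not_nil hc.not_nil).1 hx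
    obtain ⟨e', -, rfl⟩ := (edgeSet_map f G).subset (c.edges_subset_edgeSet he)
    obtain ⟨y, -, rfl⟩ := Sym2.mem_map.1 hxe
    exact ⟨y, rfl⟩
  have hcyc : (c.induce _ hsupp).IsCycle :=
    Walk.IsCycle.of_map (f := (Embedding.induce _).toHom) (by rwa [Walk.map_induce])
  exact ((Embedding.map f G).isoInduceRange.isAcyclic_iff.1 h) _ hcyc

theorem isAcyclic_map_iff {G : SimpleGraph V} (f : V ↪ W) : (G.map f).IsAcyclic ↔ G.IsAcyclic :=
  ⟨.of_map f, .map f⟩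

theorem fromEdgeSet_image_map (f : V ↪ W) (S : Set (Sym2 V)) :
    fromEdgeSet (Sym2.map f '' S) = (fromEdgeSet S).map f := by
  ext x y
  simp only [fromEdgeSet_adj, map_adj, Set.mem_image]
  constructor
  · rintro ⟨⟨e, he, hxy⟩, hne⟩
    induction e using Sym2.ind with
    | _ a b =>
      rw [Sym2.map_mk, Sym2.eq_iff] at hxy
      rcases hxy with ⟨rfl, rfl⟩ | ⟨rfl, rfl⟩
      · exact ⟨a, b, ⟨he, fun h => hne (h ▸ rfl)⟩, rfl, rfl⟩
      · exact ⟨b, a, ⟨Sym2.eq_swap ▸ he, fun h => hne (h ▸ rfl)⟩, rfl, rfl⟩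
  · rintro ⟨a, b, ⟨hab, hne⟩, rfl, rfl⟩
    exact ⟨⟨s(a, b), hab, rfl⟩, f.injective.ne hne⟩

theorem isAcyclic_fromEdgeSet_preimage_map (f : V ↪ W) {A : Set (Sym2 W)}
    (h : (fromEdgeSet A).IsAcyclic) : (fromEdgeSet (Sym2.map f ⁻¹' A)).IsAcyclic := by
  refine .of_map f ?_
  rw [← fromEdgeSet_image_map]
  exact h.anti (fromEdgeSet_mono (Set.image_preimage_subset _ _))

theorem isSpanningForest_iff_maximal {G : SimpleGraph V} {T : Set (Sym2 V)} :
    G.IsSpanningForest T ↔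
      Maximal (fun T : Set (Sym2 V) => T ⊆ G.edgeSet ∧ (fromEdgeSet T).IsAcyclic) T := by
  refine ⟨fun ⟨hsub, hac, hmax⟩ => ⟨⟨hsub, hac⟩, fun T' hT' hTT' => ?_⟩,
    fun h => ⟨h.1.1, h.1.2, fun T' hTT' hsub hac => ?_⟩⟩
  · exact (hmax T' hTT' hT'.1 hT'.2).le
  · exact (h.2 ⟨hsub, hac⟩ hTT').antisymm hTT'

theorem map_inl_injective : Function.Injective (Sym2.map (Sum.inl : V → V ⊕ Unit)) :=
  Sym2.map.injective Sum.inl_injective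

theorem map_inl_ne_mk_inl_inr (e : Sym2 V) (v : V) :
    Sym2.map Sum.inl e ≠ s(.inl v, .inr (() : Unit)) := by
  induction e using Sym2.ind with
  | _ a b => simp

theorem attachEdge_eq_map_sup_edge (G : SimpleGraph V) (v : V) :
    G.attachEdge v = G.map Function.Embedding.inl ⊔ edge (.inl v) (.inr ()) := by
  ext (x | x) (y | y) <;> simp [attachEdge, edge_adj]

theorem edgeSet_attachEdge (G : SimpleGraph V) (v : V) :
    (G.attachEdge v).edgeSet = insert s(.inl v, .inr ()) (Sym2.map Sum.inl '' G.edgeSet) := by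
  rw [attachEdge_eq_map_sup_edge, edgeSet_sup, edgeSet_map, edgeSet_edge_of_ne Sum.inl_ne_inr,
    Set.union_singleton]
  rfl

theorem isAcyclic_fromEdgeSet_insert_image_inl_iff (S : Set (Sym2 V)) (v : V) :
    (fromEdgeSet (insert s(.inl v, .inr ()) (Sym2.map Sum.inl '' S))).IsAcyclic ↔
      (fromEdgeSet S).IsAcyclic := by
  have hiso : ((fromEdgeSet S).map Function.Embedding.inl).neighborSet (.inr ()) = ∅ := by
    ext; simp
  have himage : fromEdgeSet (Sym2.map Sum.inl '' S) =
      (fromEdgeSet S).map (Function.Embedding.inl : V ↪ V ⊕ Unit) :=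
    fromEdgeSet_image_map .inl S
  rw [← Set.union_singleton, fromEdgeSet_union, himage]
  exact (isAcyclic_add_edge_iff_of_not_reachable _ _
    (not_reachable_of_neighborSet_right_eq_empty Sum.inl_ne_inr hiso)).trans
    (isAcyclic_map_iff _)

theorem preimage_map_inl_insert_image (T : Set (Sym2 V)) (v : V) :
    Sym2.map Sum.inl ⁻¹' insert s(.inl v, .inr ()) (Sym2.map Sum.inl '' T) = T := by
  ext e
  simp [map_inl_injective.eq_iff, map_inl_ne_mk_inl_inr]

theorem isSpanningForest_attachEdge_iff {G : SimpleGraph V} {v : V}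
    {T' : Set (Sym2 (V ⊕ Unit))} :
    (G.attachEdge v).IsSpanningForest T' ↔
      G.IsSpanningForest (Sym2.map Sum.inl ⁻¹' T') ∧
        insert s(.inl v, .inr ()) (Sym2.map Sum.inl '' (Sym2.map Sum.inl ⁻¹' T')) = T' := by
  simp only [isSpanningForest_iff_maximal]
  refine maximal_iff_maximal_and_eq_of_leftInverse
    (f := fun T => insert s(.inl v, .inr ()) (Sym2.map Sum.inl '' T))
    (fun _ _ h => Set.insert_subset_insert (Set.image_mono h)) (fun _ _ h => Set.preimage_mono h)
    (fun T => ?_) (fun T hT => ?_) (fun A hA => ?_) (fun A hA => ?_)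
  · exact preimage_map_inl_insert_image T v
  · refine ⟨?_, (isAcyclic_fromEdgeSet_insert_image_inl_iff T v).2 hT.2⟩
    rw [edgeSet_attachEdge]
    exact Set.insert_subset_insert (Set.image_mono hT.1)
  · refine ⟨fun e he => ?_, isAcyclic_fromEdgeSet_preimage_map .inl hA.2⟩
    have := hA.1 he
    rw [edgeSet_attachEdge] at this
    rcases this with h | ⟨f, hf, hfe⟩
    · exact absurd h (map_inl_ne_mk_inl_inr e v)
    · rwa [← map_inl_injective hfe]
  · intro e he
    have := hA.1 he
    rw [edgeSet_attachEdge] at this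
    rcases this with h | ⟨f, -, rfl⟩
    · exact .inl h
    · exact .inr ⟨f, he, rfl⟩

def attachEdgeEquiv (G : SimpleGraph V) (v : V) : Option G.edgeSet ≃ (G.attachEdge v).edgeSet :=
  Equiv.ofBijective
    (Option.elim · ⟨s(.inl v, .inr ()), by simp [edgeSet_attachEdge]⟩ (G.attachEdgeInc v)) <| by
    refine ⟨?_, fun ⟨e, he⟩ => ?_⟩
    · rintro (_ | e) (_ | f) h <;> simp only [Option.elim, Subtype.ext_iff, attachEdgeInc] at h
      · rfl
      · exact absurd h.symm (map_inl_ne_mk_inl_inr _ v)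
      · exact absurd h (map_inl_ne_mk_inl_inr _ v)
      · exact congrArg some (Subtype.ext (map_inl_injective h))
    · rw [edgeSet_attachEdge] at he
      rcases he with rfl | ⟨f, hf, rfl⟩
      · exact ⟨none, rfl⟩
      · exact ⟨some ⟨f, hf⟩, rfl⟩

@[simp]
theorem attachEdgeEquiv_none (G : SimpleGraph V) (v : V) :
    (attachEdgeEquiv G v none : Sym2 (V ⊕ Unit)) = s(.inl v, .inr ()) :=
  rfl

@[simp]
theorem attachEdgeEquiv_some (G : SimpleGraph V) (v : V) (e : G.edgeSet) :
    attachEdgeEquiv G v (some e) = G.attachEdgeInc v e :=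
  rfl

theorem prod_X_not_mem_attachEdge_forest {R : Type*} [CommSemiring R] [Fintype V]
    (G : SimpleGraph V) (v : V) (T : Finset (Sym2 V)) :
    ∏ e ∈ Finset.univ.filter (fun e : (G.attachEdge v).edgeSet =>
        (e : Sym2 (V ⊕ Unit)) ∉ insert s(.inl v, .inr ()) (T.image (Sym2.map Sum.inl))),
        (X e : MvPolynomial _ R) =
      rename (G.attachEdgeInc v)
        (∏ e ∈ Finset.univ.filter (fun e : G.edgeSet => (e : Sym2 V) ∉ T), X e) := by
  rw [map_prod, Finset.prod_filter, Finset.prod_filter, ← (attachEdgeEquiv G v).prod_comp,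
    Fintype.prod_option]
  simp [attachEdgeInc, map_inl_ne_mk_inl_inr, map_inl_injective.eq_iff]

theorem kirchhoff_attachEdge_eq_rename [Fintype V] (G : SimpleGraph V) (v : V) :
    (G.attachEdge v).kirchhoff = rename (G.attachEdgeInc v) G.kirchhoff := by
  rw [kirchhoff, kirchhoff, map_sum]
  refine (Finset.sum_nbij' (fun T => insert s(.inl v, .inr ()) (T.image (Sym2.map Sum.inl)))
    (fun T' => T'.preimage (Sym2.map Sum.inl) map_inl_injective.injOn)
    (fun T hT => ?_) (fun T' hT' => ?_) (fun T _ => ?_) (fun T' hT' => ?_)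
    (fun T _ => ?_)).symm
  all_goals simp only [Finset.mem_filter, Finset.mem_univ, true_and] at *
  · rw [Finset.coe_insert, Finset.coe_image, isSpanningForest_attachEdge_iff,
      preimage_map_inl_insert_image]
    exact ⟨hT, rfl⟩
  · rw [Finset.coe_preimage]
    exact (isSpanningForest_attachEdge_iff.1 hT').1
  · exact Finset.coe_injective (by simpa using preimage_map_inl_insert_image (T : Set _) v)
  · exact Finset.coe_injective (by simpa using (isSpanningForest_attachEdge_iff.1 hT').2)
  -- `kirchhoff` decides `e ∈ T'` with the classical `DecidableEq (V ⊕ Unit)`, not `Sum`'s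
  · convert (prod_X_not_mem_attachEdge_forest (R := ℤ) G v T).symm using 3

end SimpleGraph

/-- Let `G'` be obtained from `G` by attaching an edge to the vertex
`v`. Then `Ψ_{G'}` equals the image of `Ψ_G` under the variable renaming induced by
`E(G) ↪ E(G')` (in particular the new edge variable does not occur in `Ψ_{G'}`), and
`k^{E(G')} ∖ X̂_{G'} ≃ k × (k^{E(G)} ∖ X̂_G)`. -/
theorem kirchhoff_attachEdge {V : Type*} [Fintype V] (G : SimpleGraph V) (v : V)
    (k : Type*) [Field k] :
    (G.attachEdge v).kirchhoff = MvPolynomial.rename (G.attachEdgeInc v) G.kirchhoff ∧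
    (⟨s(Sum.inl v, Sum.inr ()),
        ((G.attachEdge v).mem_edgeSet).mpr (Or.inr (Or.inl ⟨rfl, rfl⟩))⟩ :
      (G.attachEdge v).edgeSet) ∉ (G.attachEdge v).kirchhoff.vars ∧
    Nonempty (((G.attachEdge v).graphHypersurfaceComplement k) ≃
      k × (G.graphHypersurfaceComplement k)) := by
  have hΨ := G.kirchhoff_attachEdge_eq_rename v
  refine ⟨hΨ, fun h => ?_, ⟨?_⟩⟩
  · obtain ⟨e, -, he⟩ := mem_vars_rename _ _ (hΨ ▸ h)
    exact SimpleGraph.map_inl_ne_mk_inl_inr (e : Sym2 V) v (congrArg Subtype.val he)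
  · rw [SimpleGraph.graphHypersurfaceComplement, hΨ]
    exact nonvanishingRenameEquiv (G.attachEdgeEquiv v) G.kirchhoff
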